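/- Let θ be real with 1 ≤ θ ≤ 2.13 and let r = 5. If γ is the unique root in (0, 0.56) of q(x) = 1 − (r − θ)x + (r − 2θ)x² + θx³, then θ ≤ 1/(1 − γ), equivalently 1 − 1/θ ≤ γ. -/

import Mathlib

/-!
Expanding the cubic `q 5 θ` around `x₀ = 1 - 1/θ` gives
`q 5 θ (x₀ - v) = ((θ - 2)/θ)² + (7 - 3θ)/θ · v + v²(θ + 2 - θv)`,
in which every term is nonnegative and the last one positive for `0 < v ≤ x₀` once `θ ≤ 7/3`.
Hence `q 5 θ` has no root in `[0, x₀)`, so a positive root `γ` satisfies `x₀ ≤ γ`.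
-/

def q (r θ x : ℝ) : ℝ :=
  1 - (r - θ) * x + (r - 2 * θ) * x ^ 2 + θ * x ^ 3

lemma q_five_one_sub_inv_sub {θ : ℝ} (hθ : θ ≠ 0) (v : ℝ) :
    q 5 θ (1 - 1 / θ - v) =
      ((θ - 2) / θ) ^ 2 + (7 - 3 * θ) / θ * v + v ^ 2 * (θ + 2 - θ * v) := by
  unfold q
  field_simp
  ring

lemma q_five_pos_of_lt_one_sub_inv {θ x : ℝ} (hθ : 0 < θ) (hθ' : θ ≤ 7 / 3)
    (hx : 0 ≤ x) (hxθ : x < 1 - 1 / θ) : 0 < q 5 θ x := by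
  set v := 1 - 1 / θ - x with hv
  have hv0 : 0 < v := by linarith
  have hθv : θ * v = θ - 1 - θ * x := by
    rw [hv]
    field_simp
  have hx_eq : x = 1 - 1 / θ - v := by ring
  rw [hx_eq, q_five_one_sub_inv_sub hθ.ne']
  have hlin : 0 ≤ (7 - 3 * θ) / θ * v := mul_nonneg (div_nonneg (by linarith) hθ.le) hv0.le
  have hcub : 0 < v ^ 2 * (θ + 2 - θ * v) :=
    mul_pos (pow_pos hv0 2) (by nlinarith [mul_nonneg hθ.le hx])
  linarith [sq_nonneg ((θ - 2) / θ)]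

/-- Let `1 ≤ θ ≤ 2.13` and `r = 5`. If `γ` is the root of `q` in `(0, 0.56)`,
then `θ ≤ 1/(1 - γ)`, equivalently `1 - 1/θ ≤ γ`. -/
theorem theta_le (θ γ : ℝ) (hθ1 : 1 ≤ θ) (hθ2 : θ ≤ 2.13)
    (hγ : 0 < γ ∧ γ < 0.56 ∧ q 5 θ γ = 0) :
    θ ≤ 1 / (1 - γ) ∧ 1 - 1 / θ ≤ γ := by
  obtain ⟨hγ0, hγ1, hqγ⟩ := hγ
  have hθ0 : 0 < θ := by linarith
  have hγ_ge : 1 - 1 / θ ≤ γ := by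
    by_contra! hlt
    exact (q_five_pos_of_lt_one_sub_inv hθ0 (by linarith) hγ0.le hlt).ne' hqγ
  refine ⟨?_, hγ_ge⟩
  rw [le_one_div hθ0 (by linarith)]
  linarith
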